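/- arXiv:1409.0577 — 10 statements merged into one kernel-verified Lean document; each statement's English description precedes it below -/
import Mathlib

section
/- For real p, q > 0 with p·q = 1, the only positive zero of λ ↦ λ^(q+1) - (p+1)·λ^q + p is λ = 1. -/
theorem stmt_2 (p q : ℝ) (hp : 0 < p) (hq : 0 < q) (hpq : p * q = 1) :
    ∀ l : ℝ, 0 < l → (l ^ (q + 1) - (p + 1) * l ^ q + p = 0 ↔ l = 1) := by
  intro l hl
  constructor
  · intro h
    by_contra hne
    set t := l ^ q with ht
    have htpos : 0 < t := Real.rpow_pos_of_pos hl q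
    have htp : t ^ p = l := by
      rw [ht]
      rw [← Real.rpow_mul hl.le]
      rw [mul_comm q p, hpq, Real.rpow_one]
    have htne : t ≠ 1 := by
      intro h1
      apply hne
      rw [← htp, h1, Real.one_rpow]
    have hkey : l ^ (q + 1) = t ^ (p + 1) := by
      rw [Real.rpow_add hl, Real.rpow_add htpos, Real.rpow_one, Real.rpow_one, htp, ← ht,
        mul_comm]
    -- Bernoulli: 1 + (p+1)*(t-1) < t^(p+1)
    have hb := one_add_mul_self_lt_rpow_one_add (s := t - 1) (by linarith) (by
      intro h0; apply htne; linarith) (p := p + 1) (by linarith)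
    rw [show (1 : ℝ) + (t - 1) = t by ring] at hb
    rw [hkey, ht] at h
    nlinarith [hb, h]
  · intro h
    subst h
    simp [Real.one_rpow]
end

section
/- For real p, q > 0 with p·q > 1, the function λ ↦ λ^(q+1) - (p+1)·λ^q + p has a unique zero λ(p,q) in the interval (1, ∞), and this zero satisfies (p+1)q/(q+1) < λ(p,q) < p + 1. -/
/-!
For `x > 0` the equation reads `g x = p` with `g x = x ^ q * (p + 1 - x)`, and `g 1 = p`.
Since `g' x = x ^ (q - 1) * ((p + 1) * q - (q + 1) * x)`, the function `g` increases up to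
`a = (p + 1) * q / (q + 1)` and decreases afterwards; `p * q > 1` is exactly `a > 1`.
Hence a second solution of `g x = p` with `x > 1` cannot lie in `(1, a]`, nor at or beyond the
zero `p + 1` of `g`; it exists in `(a, p + 1)` by the intermediate value theorem and is unique
there because `g` is strictly decreasing on `[a, ∞)`.
-/

open Set

noncomputable def rpowMulSub (q c x : ℝ) : ℝ := x ^ q * (c - x)

namespace rpowMulSub

variable {q c x : ℝ}

@[simp] lemma apply_one : rpowMulSub q c 1 = c - 1 := by simp [rpowMulSub]

@[simp] lemma apply_self : rpowMulSub q c c = 0 := by simp [rpowMulSub]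

lemma nonpos_of_le (hcx : c ≤ x) (hx : 0 ≤ x) : rpowMulSub q c x ≤ 0 :=
  mul_nonpos_of_nonneg_of_nonpos (Real.rpow_nonneg hx q) (by linarith)

lemma rpow_add_one_sub_mul_rpow_add_eq_zero_iff {p : ℝ} (hx : 0 < x) :
    x ^ (q + 1) - c * x ^ q + p = 0 ↔ rpowMulSub q c x = p := by
  rw [Real.rpow_add_one hx.ne', rpowMulSub]
  constructor <;> intro h <;> linarith

lemma hasDerivAt (hx : 0 < x) :
    HasDerivAt (rpowMulSub q c) (x ^ (q - 1) * (c * q - (q + 1) * x)) x := by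
  have hpow : HasDerivAt (fun x : ℝ => x ^ q) (q * x ^ (q - 1)) x :=
    Real.hasDerivAt_rpow_const (Or.inl hx.ne')
  refine (hpow.mul ((hasDerivAt_id x).const_sub c)).congr_deriv ?_
  have hxq : x ^ q = x ^ (q - 1) * x := by
    rw [← Real.rpow_add_one hx.ne', sub_add_cancel]
  rw [hxq]
  simp only [id]
  ring

lemma continuousOn : ContinuousOn (rpowMulSub q c) (Ioi 0) := fun _ hx =>
  (hasDerivAt hx).continuousAt.continuousWithinAt

lemma strictMonoOn (hq : -1 < q) :
    StrictMonoOn (rpowMulSub q c) (Ioc 0 (c * q / (q + 1))) := by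
  have hq1 : 0 < q + 1 := by linarith
  refine strictMonoOn_of_deriv_pos (convex_Ioc _ _)
    (continuousOn.mono fun x hx => hx.1) fun x hx => ?_
  rw [interior_Ioc] at hx
  rw [(hasDerivAt hx.1).deriv]
  have hx2 := (lt_div_iff₀ hq1).mp hx.2
  exact mul_pos (Real.rpow_pos_of_pos hx.1 _) (by linarith)

lemma strictAntiOn (hq : -1 < q) (ha : 0 < c * q / (q + 1)) :
    StrictAntiOn (rpowMulSub q c) (Ici (c * q / (q + 1))) := by
  have hq1 : 0 < q + 1 := by linarith
  refine strictAntiOn_of_deriv_neg (convex_Ici _)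
    (continuousOn.mono fun x hx => ha.trans_le hx) fun x hx => ?_
  rw [interior_Ici] at hx
  have hx0 : 0 < x := ha.trans hx
  rw [(hasDerivAt hx0).deriv]
  have hx2 := (div_lt_iff₀ hq1).mp hx
  exact mul_neg_of_pos_of_neg (Real.rpow_pos_of_pos hx0 _) (by linarith)

lemma lt_and_lt_of_eq_apply_one (hq : -1 < q) (hc : 1 < c) {l : ℝ} (hl : 1 < l)
    (h : rpowMulSub q c l = rpowMulSub q c 1) : c * q / (q + 1) < l ∧ l < c := by
  constructor
  · by_contra! hla
    have := strictMonoOn hq ⟨one_pos, hl.le.trans hla⟩ ⟨by linarith, hla⟩ hl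
    exact this.ne h.symm
  · by_contra! hcl
    have := nonpos_of_le (q := q) hcl (by linarith)
    rw [h, apply_one] at this
    linarith

lemma exists_mem_Ioo_eq_apply_one (hq : -1 < q) (hc : 0 < c) (ha : 1 < c * q / (q + 1)) :
    ∃ l ∈ Ioo (c * q / (q + 1)) c, rpowMulSub q c l = rpowMulSub q c 1 := by
  have hac : c * q / (q + 1) < c := by
    rw [div_lt_iff₀ (by linarith)]
    linarith
  have hcont : ContinuousOn (rpowMulSub q c) (Icc (c * q / (q + 1)) c) :=
    continuousOn.mono fun x hx => (one_pos.trans ha).trans_le hx.1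
  have hpeak := strictMonoOn hq ⟨one_pos, ha.le⟩ ⟨one_pos.trans ha, le_rfl⟩ ha
  refine intermediate_value_Ioo' hac.le hcont ⟨?_, hpeak⟩
  rw [apply_self, apply_one]
  linarith

end rpowMulSub

open rpowMulSub in
theorem stmt_3 (p q : ℝ) (hp : 0 < p) (hq : 0 < q) (hpq : 1 < p * q) :
    (∃! l : ℝ, 1 < l ∧ l ^ (q + 1) - (p + 1) * l ^ q + p = 0) ∧
    (∀ l : ℝ, 1 < l → l ^ (q + 1) - (p + 1) * l ^ q + p = 0 →
      (p + 1) * q / (q + 1) < l ∧ l < p + 1) := by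
  have hq' : -1 < q := by linarith
  have hc : 1 < p + 1 := by linarith
  have ha : 1 < (p + 1) * q / (q + 1) := by
    rw [lt_div_iff₀ (by linarith)]
    linarith
  have hroot : ∀ l, 1 < l →
      (l ^ (q + 1) - (p + 1) * l ^ q + p = 0 ↔ rpowMulSub q (p + 1) l = rpowMulSub q (p + 1) 1) :=
    fun l hl => by
      rw [rpow_add_one_sub_mul_rpow_add_eq_zero_iff (by linarith), apply_one, add_sub_cancel_right]
  have hbounds : ∀ l, 1 < l → l ^ (q + 1) - (p + 1) * l ^ q + p = 0 →
      (p + 1) * q / (q + 1) < l ∧ l < p + 1 := fun l hl h =>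
    lt_and_lt_of_eq_apply_one hq' hc hl ((hroot l hl).mp h)
  obtain ⟨l, hl, hgl⟩ := exists_mem_Ioo_eq_apply_one hq' (by linarith) ha
  have hl1 : 1 < l := ha.trans hl.1
  refine ⟨⟨l, ⟨hl1, (hroot l hl1).mpr hgl⟩, fun y ⟨hy1, hy⟩ => ?_⟩, hbounds⟩
  exact (strictAntiOn hq' (by linarith)).injOn (hbounds y hy1 hy).1.le hl.1.le
    (((hroot y hy1).mp hy).trans hgl.symm)
end

section
/- For real p, q > 0 with p·q < 1, the function λ ↦ λ^(q+1) - (p+1)·λ^q + p has a unique zero λ(p,q) in the interval (0, 1), and this zero satisfies 0 < λ(p,q) < (p+1)q/(q+1) < 1. -/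
/-!
Writing `λ₀ = (p+1)q/(q+1)`, the derivative of `Q` at `λ > 0` is `λ^(q-1)((q+1)λ - (p+1)q)`, so `Q` decreases
strictly on `[0, λ₀]` and increases strictly on `[λ₀, ∞)`. Since `pq < 1` puts `λ₀` inside `(0, 1)` and `Q(1) = 0`,
`Q` is negative on `[λ₀, 1)`, while `Q(0) = p > 0`: the only zero in `(0, 1)` is the one given by the intermediate
value theorem on `(0, λ₀)`.
-/

open Set

namespace RpowQ

noncomputable def Q (p q l : ℝ) : ℝ := l ^ (q + 1) - (p + 1) * l ^ q + p

noncomputable def crit (p q : ℝ) : ℝ := (p + 1) * q / (q + 1)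

variable {p q : ℝ}

theorem Q_zero (hq : 0 < q) : Q p q 0 = p := by
  simp [Q, Real.zero_rpow (by linarith : q + 1 ≠ 0), Real.zero_rpow hq.ne']

theorem Q_one : Q p q 1 = 0 := by
  simp [Q]

theorem continuous_Q (hq : 0 ≤ q) : Continuous (Q p q) :=
  ((Real.continuous_rpow_const (by linarith)).sub
    (continuous_const.mul (Real.continuous_rpow_const hq))).add continuous_const

theorem hasDerivAt_Q {l : ℝ} (hl : 0 < l) :
    HasDerivAt (Q p q) (l ^ (q - 1) * ((q + 1) * l - (p + 1) * q)) l := by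
  have hpow (r : ℝ) : HasDerivAt (fun x : ℝ => x ^ r) (r * l ^ (r - 1)) l :=
    Real.hasDerivAt_rpow_const (Or.inl hl.ne')
  refine (((hpow (q + 1)).sub ((hpow q).const_mul (p + 1))).add_const p).congr_deriv ?_
  have hsplit : l ^ q = l ^ (q - 1) * l := by rw [← Real.rpow_add_one hl.ne', sub_add_cancel]
  rw [add_sub_cancel_right, hsplit]
  ring

theorem crit_pos (hp : -1 < p) (hq : 0 < q) : 0 < crit p q :=
  div_pos (mul_pos (by linarith) hq) (by linarith)

theorem crit_lt_one (hq : -1 < q) (hpq : p * q < 1) : crit p q < 1 := by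
  rw [crit, div_lt_one (by linarith)]
  linarith

theorem strictAntiOn_Q (hq : 0 ≤ q) : StrictAntiOn (Q p q) (Icc 0 (crit p q)) := by
  refine strictAntiOn_of_deriv_neg (convex_Icc _ _) (continuous_Q hq).continuousOn ?_
  intro x hx
  rw [interior_Icc] at hx
  obtain ⟨hx0, hx⟩ := hx
  rw [(hasDerivAt_Q hx0).deriv]
  rw [crit, lt_div_iff₀ (by linarith)] at hx
  exact mul_neg_of_pos_of_neg (Real.rpow_pos_of_pos hx0 _) (by linarith)

theorem strictMonoOn_Q (hp : -1 ≤ p) (hq : 0 ≤ q) : StrictMonoOn (Q p q) (Ici (crit p q)) := by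
  refine strictMonoOn_of_deriv_pos (convex_Ici _) (continuous_Q hq).continuousOn ?_
  intro x hx
  rw [interior_Ici] at hx
  have hx0 : 0 < x := lt_of_le_of_lt (div_nonneg (by nlinarith) (by linarith)) hx
  rw [(hasDerivAt_Q hx0).deriv]
  rw [mem_Ioi, crit, div_lt_iff₀ (by linarith)] at hx
  exact mul_pos (Real.rpow_pos_of_pos hx0 _) (by linarith)

theorem Q_neg_of_crit_le_of_lt_one (hp : -1 ≤ p) (hq : 0 ≤ q) {l : ℝ} (hl : crit p q ≤ l)
    (hl1 : l < 1) : Q p q l < 0 :=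
  Q_one (p := p) (q := q) ▸ strictMonoOn_Q hp hq hl (hl.trans hl1.le) hl1

theorem exists_Q_eq_zero (hp : 0 < p) (hq : 0 < q) (hpq : p * q < 1) :
    ∃ l ∈ Ioo 0 (crit p q), Q p q l = 0 := by
  have hQcrit : Q p q (crit p q) < 0 :=
    Q_neg_of_crit_le_of_lt_one (by linarith) hq.le le_rfl (crit_lt_one (by linarith) hpq)
  have hQ0 : 0 < Q p q 0 := by rwa [Q_zero hq]
  exact intermediate_value_Ioo' (crit_pos (p := p) (by linarith) hq).le
    (continuous_Q hq.le).continuousOn ⟨hQcrit, hQ0⟩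

end RpowQ

open RpowQ in
theorem stmt_4 (p q : ℝ) (hp : 0 < p) (hq : 0 < q) (hpq : p * q < 1) :
    (∃! l : ℝ, 0 < l ∧ l < 1 ∧ l ^ (q + 1) - (p + 1) * l ^ q + p = 0) ∧
    (∀ l : ℝ, 0 < l → l < 1 → l ^ (q + 1) - (p + 1) * l ^ q + p = 0 →
      0 < l ∧ l < (p + 1) * q / (q + 1) ∧ (p + 1) * q / (q + 1) < 1) := by
  have hcrit1 : crit p q < 1 := crit_lt_one (by linarith) hpq
  have lt_crit (l : ℝ) (hl1 : l < 1) (hQ : Q p q l = 0) : l < crit p q := by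
    by_contra! h
    exact (Q_neg_of_crit_le_of_lt_one (by linarith) hq.le h hl1).ne hQ
  obtain ⟨c, ⟨hc0, hc⟩, hQc⟩ := exists_Q_eq_zero hp hq hpq
  refine ⟨⟨c, ⟨hc0, hc.trans hcrit1, hQc⟩, ?_⟩, fun l hl0 hl1 hQ => ⟨hl0, lt_crit l hl1 hQ, hcrit1⟩⟩
  rintro l ⟨hl0, hl1, hQ⟩
  exact (strictAntiOn_Q hq.le).injOn ⟨hl0.le, (lt_crit l hl1 hQ).le⟩ ⟨hc0.le, hc.le⟩
    (hQ.trans hQc.symm)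
end

section
/- For fixed real p > 0, the sequence n ↦ λ⁽ⁿ⁾(p) of dominant roots of λ^n - p(λ^(n-1) + ⋯ + 1) is strictly increasing in n (for n such that p·n > 1) and converges to p + 1 as n → ∞. -/
/-!
Put `u = 1/λ`. Dividing `λ^n = p (λ^(n-1) + ⋯ + 1)` by `λ^n` gives `p (u + u^2 + ⋯ + u^n) = 1`;
the left side increases both in `u` and in `n`, so the solution `u` decreases as `n` grows.
Multiplying the equation by `λ - 1` gives `λ^n (p + 1 - λ) = p`. Once `p n > 1` we have `λ > 1`,
so by monotonicity `λ⁽ⁿ⁾ ≥ c > 1` eventually and `p + 1 - λ⁽ⁿ⁾ = p / (λ⁽ⁿ⁾)^n ≤ p / c^n → 0`.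
-/

open Finset Filter

lemma pow_mul_sum_range_pow_succ_of_mul_eq_one {R : Type*} [CommRing R] {x u : R}
    (hxu : x * u = 1) (n : ℕ) :
    x ^ n * ∑ j ∈ range n, u ^ (j + 1) = ∑ k ∈ range n, x ^ k := by
  induction n with
  | zero => simp
  | succ n ih =>
    rw [sum_range_succ, mul_add, ← mul_pow, hxu, one_pow, pow_succ', mul_assoc, ih, mul_sum,
      sum_range_succ' _ n]
    simp only [pow_succ', pow_zero]

lemma pow_mul_add_one_sub_eq_of_pow_eq {R : Type*} [CommRing R] {p x : R} {n : ℕ}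
    (h : x ^ n = p * ∑ k ∈ range n, x ^ k) :
    x ^ n * (p + 1 - x) = p := by
  have := geom_sum_mul x n
  linear_combination (-(x - 1)) * h - p * this

section RealRoots

variable {p x : ℝ} {n : ℕ}

lemma mul_sum_range_inv_pow_succ_eq_one (hx : 0 < x)
    (h : x ^ n = p * ∑ k ∈ range n, x ^ k) :
    p * ∑ j ∈ range n, x⁻¹ ^ (j + 1) = 1 := by
  have hxn : x ^ n ≠ 0 := (pow_pos hx n).ne'
  apply mul_left_cancel₀ hxn
  rw [mul_one, mul_left_comm,
    pow_mul_sum_range_pow_succ_of_mul_eq_one (mul_inv_cancel₀ hx.ne'), ← h]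

lemma lt_of_pow_eq_mul_geom_sum {m : ℕ} {y : ℝ} (hp : 0 < p) (hx : 0 < x) (hy : 0 < y)
    (hxm : x ^ m = p * ∑ k ∈ range m, x ^ k) (hyn : y ^ n = p * ∑ k ∈ range n, y ^ k)
    (hmn : m < n) : x < y := by
  by_contra! hyx
  have hu : 0 < x⁻¹ := inv_pos.2 hx
  have hlen : ∑ j ∈ range m, x⁻¹ ^ (j + 1) < ∑ j ∈ range n, x⁻¹ ^ (j + 1) :=
    sum_lt_sum_of_subset (range_subset_range.2 hmn.le) (mem_range.2 hmn) (by simp)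
      (pow_pos hu _) fun j _ _ => (pow_pos hu _).le
  have hbase : ∑ j ∈ range n, x⁻¹ ^ (j + 1) ≤ ∑ j ∈ range n, y⁻¹ ^ (j + 1) :=
    sum_le_sum fun j _ => pow_le_pow_left₀ hu.le (inv_anti₀ hy hyx) _
  have := mul_lt_mul_of_pos_left (hlen.trans_le hbase) hp
  rw [mul_sum_range_inv_pow_succ_eq_one hx hxm, mul_sum_range_inv_pow_succ_eq_one hy hyn] at this
  exact this.false

lemma one_lt_of_pow_eq_mul_geom_sum (hp : 0 < p) (hx : 0 < x)
    (h : x ^ n = p * ∑ k ∈ range n, x ^ k) (hpn : 1 < p * n) : 1 < x := by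
  by_contra! hx1
  have hsum : (n : ℝ) ≤ ∑ j ∈ range n, x⁻¹ ^ (j + 1) := by
    simpa using card_nsmul_le_sum (range n) (fun j => x⁻¹ ^ (j + 1)) 1
      fun j _ => one_le_pow₀ (one_le_inv₀ hx |>.2 hx1)
  have := mul_le_mul_of_nonneg_left hsum hp.le
  rw [mul_sum_range_inv_pow_succ_eq_one hx h] at this
  linarith

lemma tendsto_add_one_of_pow_eq_mul_geom_sum (hp : 0 < p) {f : ℕ → ℝ}
    (hpos : ∀ n, 1 ≤ n → 0 < f n)
    (heq : ∀ n, 1 ≤ n → f n ^ n = p * ∑ k ∈ range n, f n ^ k) :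
    Tendsto f atTop (nhds (p + 1)) := by
  obtain ⟨N, hN⟩ : ∃ N : ℕ, 1 < p * N := by
    obtain ⟨N, hN⟩ := exists_nat_gt p⁻¹
    exact ⟨N, by rwa [← inv_mul_lt_iff₀ hp, mul_one]⟩
  have hN1 : 1 ≤ N := Nat.one_le_iff_ne_zero.2 fun h => by simp [h] at hN; linarith
  have hc : 1 < f N := one_lt_of_pow_eq_mul_geom_sum hp (hpos N hN1) (heq N hN1) hN
  have hgap : ∀ᶠ n in atTop, p + 1 - f n = p / f n ^ n ∧ f N ≤ f n := by
    filter_upwards [eventually_ge_atTop N] with n hn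
    have h := pow_mul_add_one_sub_eq_of_pow_eq (heq n (hN1.trans hn))
    refine ⟨(eq_div_iff (pow_pos (hpos n (hN1.trans hn)) n).ne').2 (by rw [mul_comm, h]), ?_⟩
    rcases hn.eq_or_lt with rfl | hlt
    exacts [le_rfl, (lt_of_pow_eq_mul_geom_sum hp (hpos N hN1) (hpos n (hN1.trans hn))
      (heq N hN1) (heq n (hN1.trans hn)) hlt).le]
  have hlower : Tendsto (fun n : ℕ => p + 1 - p / f N ^ n) atTop (nhds (p + 1)) := by
    simpa using tendsto_const_nhds.sub
      (tendsto_const_nhds.div_atTop (tendsto_pow_atTop_atTop_of_one_lt hc))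
  refine tendsto_of_tendsto_of_tendsto_of_le_of_le' hlower tendsto_const_nhds ?_ ?_ <;>
    filter_upwards [hgap] with n ⟨hgap, hle⟩
  · have : p / f n ^ n ≤ p / f N ^ n :=
      div_le_div_of_nonneg_left hp.le (pow_pos (by linarith) n)
        (pow_le_pow_left₀ (by linarith) hle n)
    linarith
  · linarith [div_pos hp (pow_pos (by linarith : 0 < f n) n)]

end RealRoots

theorem stmt_7 (p : ℝ) (hp : 0 < p) (f : ℕ → ℝ)
    (hf : ∀ n : ℕ, 1 ≤ n → 0 < f n ∧
      (f n) ^ n - p * ∑ k ∈ Finset.range n, (f n) ^ k = 0) :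
    (∀ m n : ℕ, 1 ≤ m → m < n → 1 < p * m → f m < f n) ∧
    Filter.Tendsto f Filter.atTop (nhds (p + 1)) := by
  have hpos n (hn : 1 ≤ n) : 0 < f n := (hf n hn).1
  have heq n (hn : 1 ≤ n) : f n ^ n = p * ∑ k ∈ range n, f n ^ k := sub_eq_zero.1 (hf n hn).2
  refine ⟨fun m n hm hmn _ => ?_, tendsto_add_one_of_pow_eq_mul_geom_sum hp hpos heq⟩
  have hn : 1 ≤ n := hm.trans hmn.le
  exact lt_of_pow_eq_mul_geom_sum hp (hpos m hm) (hpos n hn) (heq m hm) (heq n hn) hmn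
end

section
/- If n₂ > n₁ ≥ 1 are integers, then for any positive integers m₁, m₂ with m₂ ≥ m₁ one has λ⁽ⁿ²⁾(m₂) > λ⁽ⁿ¹⁾(m₁); in general λ⁽ⁿ⁾(m₂) > λ⁽ⁿ⁾(m₁) whenever m₂ > m₁; moreover λ⁽ⁿ²⁾(m) > λ⁽ⁿ¹⁾(m) for any m and n₂ > n₁ with m·n₁ ≥ 1. -/
private lemma anacci_key (m n : ℕ) (L : ℝ) (hL : 0 < L)
    (hroot : L ^ n - (m : ℝ) * ∑ k ∈ Finset.range n, L ^ k = 0) :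
    (m : ℝ) * ∑ k ∈ Finset.range n, (1 / L) ^ (k + 1) = 1 := by
  have hLn : (0:ℝ) < L ^ n := pow_pos hL n
  have hsum : ∑ k ∈ Finset.range n, L ^ k
      = L ^ n * ∑ k ∈ Finset.range n, (1 / L) ^ (k + 1) := by
    rw [Finset.mul_sum, ← Finset.sum_range_reflect (fun k => L ^ k) n]
    refine Finset.sum_congr rfl fun k hk => ?_
    rw [Finset.mem_range] at hk
    have hn : (n - 1 - k) + (k + 1) = n := by omega
    symm
    calc L ^ n * (1 / L) ^ (k + 1)
        = L ^ (n - 1 - k) * (L ^ (k + 1) * (1 / L) ^ (k + 1)) := by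
          rw [← mul_assoc, ← pow_add, hn]
      _ = L ^ (n - 1 - k) * (L * (1 / L)) ^ (k + 1) := by rw [mul_pow]
      _ = L ^ (n - 1 - k) := by
          rw [mul_one_div_cancel hL.ne', one_pow, mul_one]
  have h1 : L ^ n = L ^ n * ((m : ℝ) * ∑ k ∈ Finset.range n, (1 / L) ^ (k + 1)) := by
    rw [← mul_assoc, mul_comm (L ^ n) (m:ℝ), mul_assoc, ← hsum]; linarith
  have := mul_left_cancel₀ hLn.ne' (h1.symm.trans (mul_one (L ^ n)).symm)
  linarith

private lemma anacci_mono (m₁ m₂ n₁ n₂ : ℕ) (hm₁ : 1 ≤ m₁)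
    (hn₁ : 1 ≤ n₁)
    (L₁ L₂ : ℝ) (hL₁ : 0 < L₁) (hL₂ : 0 < L₂)
    (h₁ : (m₁ : ℝ) * ∑ k ∈ Finset.range n₁, (1 / L₁) ^ (k + 1) = 1)
    (h₂ : (m₂ : ℝ) * ∑ k ∈ Finset.range n₂, (1 / L₂) ^ (k + 1) = 1)
    (hn : n₁ ≤ n₂) (hm : m₁ ≤ m₂) (hstrict : n₁ < n₂ ∨ m₁ < m₂) :
    L₁ < L₂ := by
  by_contra hcon
  push_neg at hcon
  have hterm : ∀ k, (0:ℝ) < (1 / L₁) ^ (k + 1) :=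
    fun k => pow_pos (by positivity) _
  have hT1pos : (0:ℝ) < ∑ k ∈ Finset.range n₁, (1 / L₁) ^ (k + 1) :=
    Finset.sum_pos (fun k _ => hterm k) (by simp; omega)
  -- m₂ * T(L₁, n₂) > 1
  have hgt : (1:ℝ) < (m₂ : ℝ) * ∑ k ∈ Finset.range n₂, (1 / L₁) ^ (k + 1) := by
    rcases hstrict with hlt | hlt
    · have hss : (∑ k ∈ Finset.range n₁, (1 / L₁) ^ (k + 1))
          < ∑ k ∈ Finset.range n₂, (1 / L₁) ^ (k + 1) := by
        refine Finset.sum_lt_sum_of_subset (Finset.range_subset_range.2 hn)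
          (Finset.mem_range.2 hlt) (by simp) (hterm n₁) ?_
        exact fun j _ _ => (hterm j).le
      calc (1:ℝ) = (m₁ : ℝ) * ∑ k ∈ Finset.range n₁, (1 / L₁) ^ (k + 1) := h₁.symm
        _ < (m₁ : ℝ) * ∑ k ∈ Finset.range n₂, (1 / L₁) ^ (k + 1) := by
            apply mul_lt_mul_of_pos_left hss
            exact_mod_cast hm₁
        _ ≤ (m₂ : ℝ) * ∑ k ∈ Finset.range n₂, (1 / L₁) ^ (k + 1) := by
            apply mul_le_mul_of_nonneg_right (by exact_mod_cast hm)
            exact Finset.sum_nonneg fun k _ => (hterm k).le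
    · have hss : (∑ k ∈ Finset.range n₁, (1 / L₁) ^ (k + 1))
          ≤ ∑ k ∈ Finset.range n₂, (1 / L₁) ^ (k + 1) :=
        Finset.sum_le_sum_of_subset_of_nonneg (Finset.range_subset_range.2 hn)
          (fun j _ _ => (hterm j).le)
      calc (1:ℝ) = (m₁ : ℝ) * ∑ k ∈ Finset.range n₁, (1 / L₁) ^ (k + 1) := h₁.symm
        _ < (m₂ : ℝ) * ∑ k ∈ Finset.range n₁, (1 / L₁) ^ (k + 1) := by
            apply mul_lt_mul_of_pos_right (by exact_mod_cast hlt) hT1pos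
        _ ≤ (m₂ : ℝ) * ∑ k ∈ Finset.range n₂, (1 / L₁) ^ (k + 1) := by
            apply mul_le_mul_of_nonneg_left hss
            positivity
  -- but L₂ ≤ L₁ gives m₂ * T(L₂, n₂) ≥ m₂ * T(L₁, n₂)
  have hle : (m₂ : ℝ) * ∑ k ∈ Finset.range n₂, (1 / L₁) ^ (k + 1)
      ≤ (m₂ : ℝ) * ∑ k ∈ Finset.range n₂, (1 / L₂) ^ (k + 1) := by
    apply mul_le_mul_of_nonneg_left _ (by positivity)
    refine Finset.sum_le_sum fun k _ => ?_
    have h1d : 1 / L₁ ≤ 1 / L₂ := one_div_le_one_div_of_le hL₂ hcon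
    exact pow_le_pow_left₀ (by positivity) h1d _
  rw [h₂] at hle
  linarith

theorem stmt_9 (m₁ m₂ n₁ n₂ : ℕ) (hm₁ : 1 ≤ m₁) (hm₂ : 1 ≤ m₂)
    (hn₁ : 1 ≤ n₁) (hn₂ : 1 ≤ n₂)
    (L₁ L₂ : ℝ) (hL₁ : 0 < L₁) (hL₂ : 0 < L₂)
    (hroot₁ : L₁ ^ n₁ - (m₁ : ℝ) * ∑ k ∈ Finset.range n₁, L₁ ^ k = 0)
    (hroot₂ : L₂ ^ n₂ - (m₂ : ℝ) * ∑ k ∈ Finset.range n₂, L₂ ^ k = 0) :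
    (n₁ < n₂ → m₁ ≤ m₂ → L₁ < L₂) ∧
    (n₁ = n₂ → m₁ < m₂ → L₁ < L₂) ∧
    (n₁ < n₂ → m₁ = m₂ → 1 ≤ m₁ * n₁ → L₁ < L₂) := by
  have h₁ := anacci_key m₁ n₁ L₁ hL₁ hroot₁
  have h₂ := anacci_key m₂ n₂ L₂ hL₂ hroot₂
  refine ⟨fun hn hm => ?_, fun hn hm => ?_, fun hn hm _ => ?_⟩
  · exact anacci_mono m₁ m₂ n₁ n₂ hm₁ hn₁ L₁ L₂ hL₁ hL₂ h₁ h₂ hn.le hm (Or.inl hn)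
  · exact anacci_mono m₁ m₂ n₁ n₂ hm₁ hn₁ L₁ L₂ hL₁ hL₂ h₁ h₂ hn.le hm.le (Or.inr hm)
  · exact anacci_mono m₁ m₂ n₁ n₂ hm₁ hn₁ L₁ L₂ hL₁ hL₂ h₁ h₂ hn.le hm.le (Or.inl hn)
end

section
/- For any real q ≥ 2 and real p > 1/Φ (where Φ = (1+√5)/2 is the golden ratio), the zero λ(p,q) of λ^(q+1) - (p+1)·λ^q + p in (1,∞) satisfies λ(p,q) > p + 1 - 1/(p+1). -/
/-!
Write `c = p + 1 - 1/(p+1)`. The root equation says `L^q (p + 1 - L) = p`, and for `L > 1`,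
`q ≥ 2` we have `L^q ≥ L^2`. Since `x^2 (p + 1 - x) - p = (x - 1)(p + p x - x^2)`, it suffices that
`x^2 - p x - p < 0` on `(1, c]`: this convex quadratic is negative at `0` and at `c`
(where it equals `-p / (p+1)^2`), hence on all of `[0, c]`. So `L ≤ c` would give
`p = L^q (p + 1 - L) ≥ L^2 (p + 1 - L) > p`.
-/

namespace Real

lemma sq_sub_mul_sub_neg_of_le {p x : ℝ} (hp : 0 < p) (hx : 0 ≤ x)
    (hxc : x ≤ p + 1 - 1 / (p + 1)) : x ^ 2 - p * x - p < 0 := by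
  set c := p + 1 - 1 / (p + 1) with hc
  have hgc : c ^ 2 - p * c - p = -p / (p + 1) ^ 2 := by
    rw [hc]; field_simp; ring
  have hgc_neg : c ^ 2 - p * c - p < 0 := by
    rw [hgc]; exact div_neg_of_neg_of_pos (neg_neg_of_pos hp) (by positivity)
  have hc_pos : 0 < c := by
    have : c = p * (p + 2) / (p + 1) := by rw [hc]; field_simp; ring
    rw [this]; positivity
  -- convexity of `g x = x^2 - p x - p`: `c · g x ≤ x · g c + (c - x) · g 0`
  have hconv : c * (x ^ 2 - p * x - p) ≤ x * (c ^ 2 - p * c - p) - (c - x) * p := by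
    nlinarith [mul_nonneg (mul_nonneg hx (sub_nonneg.mpr hxc)) hc_pos.le]
  nlinarith [mul_nonneg hx (neg_nonneg.mpr hgc_neg.le), mul_nonneg (sub_nonneg.mpr hxc) hp.le]

lemma lt_sq_mul_sub {p x : ℝ} (hp : 0 < p) (hx : 1 < x) (hxc : x ≤ p + 1 - 1 / (p + 1)) :
    p < x ^ 2 * (p + 1 - x) := by
  have hg := sq_sub_mul_sub_neg_of_le hp (by linarith) hxc
  have hfactor : x ^ 2 * (p + 1 - x) - p = (x - 1) * -(x ^ 2 - p * x - p) := by ring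
  nlinarith [mul_pos (sub_pos.mpr hx) (neg_pos.mpr hg)]

lemma rpow_mul_sub_eq_of_root {p q L : ℝ} (hL : 0 < L)
    (hroot : L ^ (q + 1) - (p + 1) * L ^ q + p = 0) : L ^ q * (p + 1 - L) = p := by
  rw [rpow_add hL, rpow_one] at hroot
  linarith

end Real

theorem stmt_10 (p q : ℝ) (hq : 2 ≤ q) (hp : 1 / ((1 + Real.sqrt 5) / 2) < p)
    (L : ℝ) (hL : 1 < L)
    (hroot : L ^ (q + 1) - (p + 1) * L ^ q + p = 0) :
    p + 1 - 1 / (p + 1) < L := by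
  have hp0 : 0 < p := lt_trans (by positivity) hp
  by_contra! hLc
  have hLp : 0 ≤ p + 1 - L := by
    have : 0 < 1 / (p + 1) := by positivity
    linarith
  have hsq : L ^ (2 : ℝ) ≤ L ^ q := Real.rpow_le_rpow_of_exponent_le hL.le hq
  rw [Real.rpow_two] at hsq
  have hmono : L ^ 2 * (p + 1 - L) ≤ L ^ q * (p + 1 - L) := mul_le_mul_of_nonneg_right hsq hLp
  rw [Real.rpow_mul_sub_eq_of_root (by linarith) hroot] at hmono
  linarith [Real.lt_sq_mul_sub hp0 hL hLc]
end

section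
/- For integers m ≥ 1 and n ≥ 2, the (m,n)-anacci constant Φ⁽ⁿ⁾(m) satisfies m + 1 - 1/(m+1) < Φ⁽ⁿ⁾(m) < m + 1. -/
/-!
Write `S = ∑_{k<n} L^k`. Multiplying `L^n = m S` by `L - 1` and using `S (L - 1) = L^n - 1`
gives `L = m + 1 - m / L^n`, so `L < m + 1`. Since `n ≥ 2`, the sum `S` contains the two distinct
terms `1` and `L` (resp. `1` and `L^(n-1)`): the second choice gives `L^n > m L^(n-1)`, i.e.
`L > m`, and then the first gives `L^n ≥ m (1 + L) > m (m + 1)`, whence `m / L^n < 1 / (m + 1)`.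
-/

open Finset

variable {K : Type*}

theorem pow_succ_eq_of_pow_eq_mul_geom_sum [CommRing K] {M x : K} {n : ℕ}
    (h : x ^ n = M * ∑ k ∈ range n, x ^ k) : x ^ (n + 1) = (M + 1) * x ^ n - M := by
  linear_combination (x - 1) * h + M * geom_sum_mul x n

section OrderedField

variable [Field K] [LinearOrder K] [IsStrictOrderedRing K]

theorem one_add_pow_le_geom_sum {x : K} (hx : 0 ≤ x) {i n : ℕ} (hi : i ≠ 0) (hin : i < n) :
    1 + x ^ i ≤ ∑ k ∈ range n, x ^ k := by
  have hsub : ({0, i} : Finset ℕ) ⊆ range n := by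
    intro k hk
    simp only [mem_insert, mem_singleton] at hk
    rw [mem_range]
    omega
  have := sum_le_sum_of_subset_of_nonneg hsub fun k _ _ ↦ pow_nonneg hx k
  rwa [sum_pair hi.symm, pow_zero] at this

variable {M L : K} {n : ℕ}

theorem pos_of_pow_eq_mul_geom_sum (hL : 0 < L) (h : L ^ n = M * ∑ k ∈ range n, L ^ k) :
    0 < M :=
  pos_of_mul_pos_left (h ▸ pow_pos hL n) (sum_nonneg fun k _ ↦ pow_nonneg hL.le k)

theorem lt_of_pow_eq_mul_geom_sum_s13 (hn : 2 ≤ n) (hL : 0 < L)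
    (h : L ^ n = M * ∑ k ∈ range n, L ^ k) : M < L := by
  have hM := pos_of_pow_eq_mul_geom_sum hL h
  have hsum := one_add_pow_le_geom_sum hL.le (i := n - 1) (n := n) (by omega) (by omega)
  have hsplit : L ^ n = L * L ^ (n - 1) := by rw [← pow_succ', Nat.sub_add_cancel (by omega)]
  have : M * L ^ (n - 1) < L * L ^ (n - 1) := by nlinarith
  exact lt_of_mul_lt_mul_right this (pow_nonneg hL.le _)

theorem lt_add_one_of_pow_eq_mul_geom_sum (hL : 0 < L)
    (h : L ^ n = M * ∑ k ∈ range n, L ^ k) : L < M + 1 := by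
  have hM := pos_of_pow_eq_mul_geom_sum hL h
  have hkey := pow_succ_eq_of_pow_eq_mul_geom_sum h
  rw [pow_succ'] at hkey
  exact lt_of_mul_lt_mul_right (by linarith) (pow_nonneg hL.le n)

theorem mul_add_one_lt_pow_of_pow_eq_mul_geom_sum (hn : 2 ≤ n) (hL : 0 < L)
    (h : L ^ n = M * ∑ k ∈ range n, L ^ k) : M * (M + 1) < L ^ n := by
  have hM := pos_of_pow_eq_mul_geom_sum hL h
  have hML := lt_of_pow_eq_mul_geom_sum_s13 hn hL h
  have hsum := one_add_pow_le_geom_sum hL.le (i := 1) (n := n) one_ne_zero (by omega)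
  rw [pow_one] at hsum
  calc M * (M + 1) < M * (1 + L) := mul_lt_mul_of_pos_left (by linarith) hM
    _ ≤ L ^ n := h ▸ mul_le_mul_of_nonneg_left hsum hM.le

theorem sub_inv_lt_of_pow_eq_mul_geom_sum (hn : 2 ≤ n) (hL : 0 < L)
    (h : L ^ n = M * ∑ k ∈ range n, L ^ k) : M + 1 - 1 / (M + 1) < L := by
  have hM := pos_of_pow_eq_mul_geom_sum hL h
  have hpow := mul_add_one_lt_pow_of_pow_eq_mul_geom_sum hn hL h
  have hkey := pow_succ_eq_of_pow_eq_mul_geom_sum h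
  rw [pow_succ'] at hkey
  have hL_eq : L = M + 1 - M / L ^ n := by
    field_simp
    linarith
  calc M + 1 - 1 / (M + 1) = M + 1 - M / (M * (M + 1)) := by field_simp
    _ < M + 1 - M / L ^ n := by gcongr
    _ = L := hL_eq.symm

end OrderedField

theorem stmt_13_general (m n : ℕ) (hn : 2 ≤ n)
    (L : ℝ) (hL : 0 < L)
    (hroot : L ^ n - (m : ℝ) * ∑ k ∈ Finset.range n, L ^ k = 0) :
    (m : ℝ) + 1 - 1 / ((m : ℝ) + 1) < L ∧ L < (m : ℝ) + 1 := by
  have h := sub_eq_zero.mp hroot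
  exact ⟨sub_inv_lt_of_pow_eq_mul_geom_sum hn hL h, lt_add_one_of_pow_eq_mul_geom_sum hL h⟩

theorem stmt_13 (m n : ℕ) (hm : 1 ≤ m) (hn : 2 ≤ n)
    (L : ℝ) (hL : 0 < L)
    (hroot : L ^ n - (m : ℝ) * ∑ k ∈ Finset.range n, L ^ k = 0) :
    (m : ℝ) + 1 - 1 / ((m : ℝ) + 1) < L ∧ L < (m : ℝ) + 1 :=
  stmt_13_general m n hn L hL hroot
end

section
/- For any fixed integer n ≥ 1, the sequence m ↦ ((m+1)/m)·Φ⁽ⁿ⁾(m) is strictly increasing in m over the positive integers. -/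
lemma aux_bounds (p : ℕ) (M : ℝ) (hM : 1 ≤ M) (l : ℝ) (hl : 0 < l)
    (he : l ^ (p + 2) = M * ∑ k ∈ Finset.range (p + 2), l ^ k) :
    M * (M + 2) / (M + 1) < l ∧ l < M + 1 := by
  set S := ∑ k ∈ Finset.range (p + 2), l ^ k with hSdef
  have hT : 0 < ∑ k ∈ Finset.range (p + 1), l ^ k :=
    Finset.sum_pos (fun k _ => pow_pos hl k) (by simp)
  have hsplit : S = (∑ k ∈ Finset.range (p + 1), l ^ k) + l ^ (p + 1) :=
    Finset.sum_range_succ _ _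
  have hlM : M < l := by
    have h1 : l ^ (p + 1) * (l - M) = M * ∑ k ∈ Finset.range (p + 1), l ^ k := by
      have : l ^ (p + 2) = l ^ (p + 1) * l := by ring
      rw [hsplit] at he
      nlinarith [he]
    have hp : 0 < l ^ (p + 1) := pow_pos hl _
    nlinarith [mul_pos (mul_pos (by linarith : (0:ℝ) < M) hT) (one_div_pos.mpr hp)]
  have hS2 : 1 + l ≤ S := by
    have hsub : Finset.range 2 ⊆ Finset.range (p + 2) := Finset.range_subset_range.mpr (by omega)
    have h := Finset.sum_le_sum_of_subset_of_nonneg hsub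
      (fun k _ _ => le_of_lt (pow_pos hl k))
    have h2sum : (∑ k ∈ Finset.range 2, l ^ k) = 1 + l := by
      rw [Finset.sum_range_succ, Finset.sum_range_one]; ring
    rw [h2sum] at h
    exact h
  have hb : M * (M + 1) < l ^ (p + 2) := by
    rw [he]
    have : M + 1 < S := by linarith
    nlinarith
  have hgeom : S * (l - 1) = l ^ (p + 2) - 1 := geom_sum_mul l (p + 2)
  have hkey : l ^ (p + 2) * ((M + 1) - l) = M := by
    have h2 : l ^ (p + 2) * (l - 1) = M * (l ^ (p + 2) - 1) := by
      rw [he]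
      nlinarith [hgeom]
    nlinarith [h2]
  have hbpos : 0 < l ^ (p + 2) := pow_pos hl _
  have hlu : l < M + 1 := by nlinarith [hkey, hbpos]
  constructor
  · rw [div_lt_iff₀ (by linarith : (0:ℝ) < M + 1)]
    nlinarith [hkey, hb, hlu]
  · exact hlu

theorem stmt_14 (n : ℕ) (hn : 1 ≤ n) (f : ℕ → ℝ)
    (hf : ∀ m : ℕ, 1 ≤ m → 0 < f m ∧
      (f m) ^ n - (m : ℝ) * ∑ k ∈ Finset.range n, (f m) ^ k = 0) :
    ∀ m : ℕ, 1 ≤ m →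
      ((m : ℝ) + 1) / (m : ℝ) * f m < ((m : ℝ) + 2) / ((m : ℝ) + 1) * f (m + 1) := by
  intro m hm
  have hmR : (1:ℝ) ≤ (m:ℝ) := by exact_mod_cast hm
  obtain ⟨h1pos, h1eq⟩ := hf m hm
  obtain ⟨h2pos, h2eq⟩ := hf (m + 1) (by omega)
  rcases Nat.lt_or_ge n 2 with hn1 | hn2
  · -- n = 1
    have hn1' : n = 1 := by omega
    subst hn1'
    simp [Finset.sum_range_one] at h1eq h2eq
    push_cast at h2eq
    have e1 : f m = (m:ℝ) := by linarith
    have e2 : f (m+1) = (m:ℝ)+1 := by linarith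
    rw [e1, e2, div_mul_eq_mul_div, div_mul_eq_mul_div,
      div_lt_div_iff₀ (by linarith) (by linarith)]
    nlinarith
  · obtain ⟨p, rfl⟩ : ∃ p, n = p + 2 := ⟨n - 2, by omega⟩
    have e1 : (f m) ^ (p + 2) = (m:ℝ) * ∑ k ∈ Finset.range (p + 2), (f m) ^ k := by
      linarith [h1eq]
    have e2 : (f (m+1)) ^ (p + 2) = ((m:ℝ) + 1) * ∑ k ∈ Finset.range (p + 2), (f (m+1)) ^ k := by
      push_cast at h2eq ⊢
      linarith [h2eq]
    obtain ⟨lo1, up1⟩ := aux_bounds p (m:ℝ) hmR (f m) h1pos e1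
    obtain ⟨lo2, up2⟩ := aux_bounds p ((m:ℝ)+1) (by linarith) (f (m+1)) h2pos e2
    -- g m < (m+1)^2/m ≤ m+3 < g (m+1)
    have hgm : ((m:ℝ) + 1) / m * f m < ((m:ℝ)+1)^2 / m := by
      rw [show ((m:ℝ)+1)^2/m = ((m:ℝ)+1)/m*((m:ℝ)+1) by ring]
      exact mul_lt_mul_of_pos_left up1 (div_pos (by linarith) (by linarith))
    have hgm2 : ((m:ℝ) + 3) < ((m:ℝ) + 2) / ((m:ℝ) + 1) * f (m + 1) := by
      rw [div_mul_eq_mul_div, lt_div_iff₀ (by linarith)]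
      have : ((m:ℝ)+1) * (((m:ℝ)+1) + 2) / (((m:ℝ)+1) + 1) < f (m+1) := lo2
      rw [div_lt_iff₀ (by linarith)] at this
      nlinarith [this]
    have hmid : ((m:ℝ)+1)^2 / m ≤ (m:ℝ) + 3 := by
      rw [div_le_iff₀ (by linarith)]
      nlinarith
    linarith
end

section
/- The triple (λ⁽ⁿ⁾(p), p, n) consists of three positive integers if and only if it equals (m, m, 1) for some positive integer m; in particular, the (m,n)-anacci constant Φ⁽ⁿ⁾(m) is an integer if and only if n = 1. -/
lemma key_16 (a b n : ℕ) (ha : 0 < a) (hb : 0 < b) (hn : 2 ≤ n)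
    (h : a ^ n = b * ∑ k ∈ Finset.range n, a ^ k) : False := by
  set S := ∑ k ∈ Finset.range n, a ^ k with hS
  have hSform : S = 1 + a * ∑ k ∈ Finset.range (n - 1), a ^ k := by
    rw [hS]
    obtain ⟨m, rfl⟩ : ∃ m, n = m + 1 := ⟨n - 1, by omega⟩
    rw [Finset.sum_range_succ' (fun k => a ^ k)]
    simp [pow_succ, Finset.mul_sum, mul_comm, add_comm]
  have hcop : Nat.Coprime a S := by
    rw [hSform]
    exact (Nat.coprime_add_mul_left_right a 1 _).mpr (Nat.coprime_one_right a)
  have hdvd : S ∣ a ^ n := ⟨b, by rw [h, mul_comm]⟩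
  have hS1 : S = 1 := ((hcop.symm.pow_right n).eq_one_of_dvd hdvd)
  have hT : 1 ≤ ∑ k ∈ Finset.range (n - 1), a ^ k := by
    have h0 : (0:ℕ) ∈ Finset.range (n-1) := by simp; omega
    simpa using Finset.single_le_sum (f := fun k => a ^ k)
      (fun i _ => Nat.zero_le _) h0
  have h2 : 2 ≤ S := by
    rw [hSform]
    nlinarith
  omega

theorem stmt_16 (p : ℝ) (hp : 0 < p) (n : ℕ) (hn : 1 ≤ n)
    (L : ℝ) (hL : 0 < L)
    (hroot : L ^ n - p * ∑ k ∈ Finset.range n, L ^ k = 0) :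
    ((∃ a : ℕ, 0 < a ∧ L = a) ∧ (∃ b : ℕ, 0 < b ∧ p = b) ↔
      ∃ m : ℕ, 0 < m ∧ L = m ∧ p = m ∧ n = 1) ∧
    (∀ m : ℕ, 1 ≤ m → p = m → ((∃ a : ℕ, 0 < a ∧ L = a) ↔ n = 1)) := by
  have main : ∀ a b : ℕ, 0 < a → 0 < b → L = a → p = b → n = 1 ∧ a = b := by
    intro a b ha hb hLa hpb
    subst hLa hpb
    have hreal : (a:ℝ) ^ n = (b:ℝ) * ∑ k ∈ Finset.range n, (a:ℝ) ^ k := by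
      linarith [hroot]
    have hnat : a ^ n = b * ∑ k ∈ Finset.range n, a ^ k := by
      exact_mod_cast hreal
    rcases Nat.lt_or_ge n 2 with h2 | h2
    · have hn1 : n = 1 := by omega
      subst hn1
      simp at hnat
      exact ⟨rfl, hnat⟩
    · exact absurd (key_16 a b n ha hb h2 hnat) (fun h => h.elim)
  constructor
  · constructor
    · rintro ⟨⟨a, ha, hLa⟩, ⟨b, hb, hpb⟩⟩
      obtain ⟨hn1, hab⟩ := main a b ha hb hLa hpb
      exact ⟨a, ha, hLa, by rw [hpb, hab], hn1⟩
    · rintro ⟨m, hm, hLm, hpm, hn1⟩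
      exact ⟨⟨m, hm, hLm⟩, ⟨m, hm, hpm⟩⟩
  · intro m hm hpm
    constructor
    · rintro ⟨a, ha, hLa⟩
      exact (main a m ha hm hLa hpm).1
    · intro hn1
      subst hn1
      simp at hroot
      exact ⟨m, hm, by linarith⟩
end

section
/- Let λ > 1, p > 0, n ≥ 1. Suppose real numbers d₁ = d(O,A) > 0 and d₂ = d(A,B) > 0 satisfy the lever equilibrium relation d(Λ(A),B)·λⁿ = d(A,B) with d(Λ(A),B) = d₁ + d₂ − λ·d₁. Then λ satisfies λ^(n+1) − (p+1)λⁿ + p = 0 if and only if d₂/d₁ = p. Consequently, in that case λ = λ⁽ⁿ⁾(p), where λ⁽ⁿ⁾(p) is the dominant root of λⁿ − p(λ^(n−1) + ⋯ + 1). -/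
lemma aux_unique_root (p : ℝ) (hp : 0 < p) (n : ℕ) (hn : 1 ≤ n) {a b : ℝ}
    (ha : 0 < a) (hb : 0 < b) (hab : a < b)
    (hA : a ^ n = p * ∑ k ∈ Finset.range n, a ^ k)
    (hB : b ^ n = p * ∑ k ∈ Finset.range n, b ^ k) : False := by
  have h1 : ∑ k ∈ Finset.range n, a ^ n * b ^ k
      < ∑ k ∈ Finset.range n, b ^ n * a ^ k := by
    apply Finset.sum_lt_sum_of_nonempty (Finset.nonempty_range_iff.mpr (by omega))
    intro k hk
    have hkn : k < n := Finset.mem_range.mp hk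
    have hpow : a ^ (n - k) < b ^ (n - k) := pow_lt_pow_left₀ hab ha.le (by omega)
    have hpos : (0 : ℝ) < a ^ k * b ^ k := by positivity
    calc a ^ n * b ^ k = a ^ (n - k) * (a ^ k * b ^ k) := by
          rw [← mul_assoc, ← pow_add, Nat.sub_add_cancel hkn.le]
      _ < b ^ (n - k) * (a ^ k * b ^ k) := mul_lt_mul_of_pos_right hpow hpos
      _ = b ^ n * a ^ k := by
          rw [show b ^ (n - k) * (a ^ k * b ^ k) = b ^ (n - k) * b ^ k * a ^ k by ring,
            ← pow_add, Nat.sub_add_cancel hkn.le]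
  have h2 : ∑ k ∈ Finset.range n, a ^ n * b ^ k
      = ∑ k ∈ Finset.range n, b ^ n * a ^ k := by
    rw [← Finset.mul_sum, ← Finset.mul_sum, hA, hB]; ring
  exact absurd h2 h1.ne

theorem stmt_18 (l p : ℝ) (hl : 1 < l) (hp : 0 < p) (n : ℕ) (hn : 1 ≤ n)
    (d₁ d₂ : ℝ) (hd₁ : 0 < d₁) (hd₂ : 0 < d₂)
    (hlever : (d₁ + d₂ - l * d₁) * l ^ n = d₂) :
    (l ^ (n + 1) - (p + 1) * l ^ n + p = 0 ↔ d₂ / d₁ = p) ∧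
    (d₂ / d₁ = p → ∀ L : ℝ, 0 < L →
      L ^ n - p * ∑ k ∈ Finset.range n, L ^ k = 0 → l = L) := by
  have hl0 : (0:ℝ) < l := lt_trans one_pos hl
  have hln : (1:ℝ) < l ^ n := one_lt_pow₀ hl (by omega)
  have hln1 : (0:ℝ) < l ^ n - 1 := by linarith
  have key : d₂ * (l ^ n - 1) = d₁ * (l ^ n * (l - 1)) := by linear_combination hlever
  constructor
  · constructor
    · intro h
      rw [pow_succ] at h
      have hpoly : l ^ n * (l - 1) = p * (l ^ n - 1) := by linear_combination h
      rw [div_eq_iff hd₁.ne']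
      have h2 : d₂ * (l ^ n - 1) = p * d₁ * (l ^ n - 1) := by
        linear_combination key + d₁ * hpoly
      exact mul_right_cancel₀ hln1.ne' h2
    · intro h
      rw [div_eq_iff hd₁.ne'] at h
      rw [pow_succ]
      have h2 : d₁ * (p * (l ^ n - 1)) = d₁ * (l ^ n * (l - 1)) := by
        linear_combination key - (l ^ n - 1) * h
      have h3 := mul_left_cancel₀ hd₁.ne' h2
      linear_combination -h3
  · intro h L hL hg
    rw [div_eq_iff hd₁.ne'] at h
    have h2 : d₁ * (p * (l ^ n - 1)) = d₁ * (l ^ n * (l - 1)) := by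
      linear_combination key - (l ^ n - 1) * h
    have hpoly := mul_left_cancel₀ hd₁.ne' h2
    have geom : (∑ k ∈ Finset.range n, l ^ k) * (l - 1) = l ^ n - 1 := geom_sum_mul l n
    have hcalc : (l ^ n - p * ∑ k ∈ Finset.range n, l ^ k) * (l - 1) = 0 := by
      linear_combination (-p) * geom - hpoly
    have hgl : l ^ n - p * ∑ k ∈ Finset.range n, l ^ k = 0 :=
      (mul_eq_zero.mp hcalc).resolve_right (sub_ne_zero.mpr hl.ne')
    have hl' : l ^ n = p * ∑ k ∈ Finset.range n, l ^ k := sub_eq_zero.mp hgl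
    have hL' : L ^ n = p * ∑ k ∈ Finset.range n, L ^ k := sub_eq_zero.mp hg
    rcases lt_trichotomy l L with hlt | heq | hgt
    · exact (aux_unique_root p hp n hn hl0 hL hlt hl' hL').elim
    · exact heq
    · exact (aux_unique_root p hp n hn hL hl0 hgt hL' hl').elim
end
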